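/- Let Ω have C^{2+α} boundary and let a be C^{1+α} and uniformly elliptic. There exists a constant C = C(a,Ω) such that for every ψ ∈ W^{1,∞}(Ω) there is a sequence (ψ̃ⁿ) of C¹ functions on Ω satisfying a(x)Dψ̃ⁿ(x)·ν(x) = 0 for all x ∈ ∂Ω, ‖ψ̃ⁿ‖_{C¹} ≤ C‖ψ‖_{W^{1,∞}}, and ψ̃ⁿ → ψ uniformly on Ω. -/

import Mathlib

open MeasureTheory Set Filter Topology
open scoped RealInnerProductSpace ENNReal NNReal

noncomputable section

namespace MasterNeumann

/-- `d`-dimensional Euclidean space. -/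
abbrev Ed (d : ℕ) := EuclideanSpace ℝ (Fin d)

variable {d : ℕ}

/-- Supremum (with junk value for unbounded families) of a real function over a set. -/
def supOn {X : Type*} (s : Set X) (g : X → ℝ) : ℝ := ⨆ x : s, g (x : X)

/-- Hölder seminorm of exponent `β` on the set `s`. -/
def hSemi {X F : Type*} [PseudoMetricSpace X] [NormedAddCommGroup F]
    (β : ℝ) (s : Set X) (g : X → F) : ℝ :=
  ⨆ p : s × s, ‖g (p.1 : X) - g (p.2 : X)‖ / dist (p.1 : X) (p.2 : X) ^ β

/-- The `C^{n+β}(s)` Hölder norm of `f`. -/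
def hNorm {F : Type*} [NormedAddCommGroup F] [NormedSpace ℝ F]
    (n : ℕ) (β : ℝ) (s : Set (Ed d)) (f : Ed d → F) : ℝ :=
  (∑ k ∈ Finset.range (n + 1), supOn s fun x => ‖iteratedFDeriv ℝ k f x‖) +
    hSemi β s (iteratedFDeriv ℝ n f)

/-- Pointwise statement that `‖f‖_{C^{n+β}(s)} ≤ C`. -/
def HNormLe (n : ℕ) (β : ℝ) (s : Set (Ed d)) (f : Ed d → ℝ) (C : ℝ) : Prop :=
  ∀ x ∈ s, ∀ y ∈ s, (∀ k ≤ n, ‖iteratedFDeriv ℝ k f x‖ ≤ C) ∧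
    ‖iteratedFDeriv ℝ n f x - iteratedFDeriv ℝ n f y‖ ≤ C * dist x y ^ β

/-- Mixed derivative `D_x^i D_y^j K`. -/
def DxDy (i j : ℕ) (K : Ed d → Ed d → ℝ) (x y : Ed d) :=
  iteratedFDeriv ℝ i (fun x' => iteratedFDeriv ℝ j (fun y' => K x' y') y) x

/-- Mixed Hölder norm `‖K‖_{n+β,k+β}`: sup norms and `β`-Hölder seminorms of all
derivatives `D_x^i D_y^j K`, `i ≤ n`, `j ≤ k`. -/
def mixedNorm (n k : ℕ) (β : ℝ) (s : Set (Ed d)) (K : Ed d → Ed d → ℝ) : ℝ :=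
  (∑ i ∈ Finset.range (n + 1), ∑ j ∈ Finset.range (k + 1),
      supOn (s ×ˢ s) fun p => ‖DxDy i j K p.1 p.2‖) +
    (∑ j ∈ Finset.range (k + 1), supOn s fun y => hSemi β s fun x => DxDy n j K x y) +
    ∑ i ∈ Finset.range (n + 1), supOn s fun x => hSemi β s fun y => DxDy i k K x y

/-- `Ω` is the closure of a bounded open set whose boundary is of class `C^{2+β}`, with
outward unit normal `ν`, encoded through a `C^{2+β}` defining function. -/
structure C2Domain (β : ℝ) (Ω : Set (Ed d)) (ν : Ed d → Ed d) : Prop where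
  compact : IsCompact Ω
  nonempty : (interior Ω).Nonempty
  closure_interior : Ω = closure (interior Ω)
  defining : ∃ ρ : Ed d → ℝ, ContDiff ℝ 2 ρ ∧
    (∃ C, ∀ x y, ‖iteratedFDeriv ℝ 2 ρ x - iteratedFDeriv ℝ 2 ρ y‖ ≤ C * dist x y ^ β) ∧
    interior Ω = {x | ρ x < 0} ∧ frontier Ω = {x | ρ x = 0} ∧
    ∀ x ∈ frontier Ω, gradient ρ x ≠ 0 ∧ ν x = ‖gradient ρ x‖⁻¹ • gradient ρ x

/-- `f` is of class `C^{1+β}` (globally). -/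
def C1Holder {F : Type*} [NormedAddCommGroup F] [NormedSpace ℝ F]
    (β : ℝ) (f : Ed d → F) : Prop :=
  ContDiff ℝ 1 f ∧ ∃ C, ∀ x y, ‖fderiv ℝ f x - fderiv ℝ f y‖ ≤ C * dist x y ^ β

/-- Uniform ellipticity of the diffusion matrix `a` on `Ω`: `λ|ξ|² ≤ ⟨a(x)ξ,ξ⟩ ≤ μ|ξ|²`. -/
def IsElliptic (lam mu : ℝ) (Ω : Set (Ed d)) (a : Ed d → Ed d →L[ℝ] Ed d) : Prop :=
  0 < lam ∧ lam ≤ mu ∧ ∀ x ∈ Ω, ∀ ξ : Ed d,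
    lam * ‖ξ‖ ^ 2 ≤ ⟪a x ξ, ξ⟫ ∧ ⟪a x ξ, ξ⟫ ≤ mu * ‖ξ‖ ^ 2

/-- `tr(a(x) D²f(x))`. -/
def traceA (a : Ed d → Ed d →L[ℝ] Ed d) (f : Ed d → ℝ) (x : Ed d) : ℝ :=
  LinearMap.trace ℝ (Ed d) ↑((a x).comp (fderiv ℝ (gradient f) x))

/-- The vector field `b̃_i(x) = Σ_j ∂a_{ji}/∂x_j (x)`. -/
def btilde (a : Ed d → Ed d →L[ℝ] Ed d) (x : Ed d) : Ed d :=
  ∑ i : Fin d, (∑ j : Fin d,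
      fderiv ℝ (fun y => ⟪a y (EuclideanSpace.single i (1:ℝ)),
        EuclideanSpace.single j (1:ℝ)⟫) x (EuclideanSpace.single j (1:ℝ)))
    • EuclideanSpace.single i (1:ℝ)

/-- `div(a(x) Df(x)) = tr(a D²f) + b̃·Df`. -/
def divADiv (a : Ed d → Ed d →L[ℝ] Ed d) (f : Ed d → ℝ) (x : Ed d) : ℝ :=
  traceA a f x + ⟪btilde a x, gradient f x⟫

/-- Borel probability measures supported in `Ω`. -/
def ProbOn (Ω : Set (Ed d)) : Set (Measure (Ed d)) :=
  {m | IsProbabilityMeasure m ∧ m Ωᶜ = 0}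

/-- The Wasserstein distance `d₁`. -/
def d1 (m₁ m₂ : Measure (Ed d)) : ℝ :=
  ⨆ φ : {φ : Ed d → ℝ // LipschitzWith 1 φ}, ((∫ x, φ.1 x ∂m₁) - ∫ x, φ.1 x ∂m₂)

/-- The `W^{1,∞}(Ω)` norm: `‖φ‖_∞ + Lip(φ)`. -/
def w1inf (Ω : Set (Ed d)) (φ : Ed d → ℝ) : ℝ :=
  supOn Ω (fun x => |φ x|) + hSemi 1 Ω φ

/-- Membership in the dual space `C^{-(n+β)}(Ω)`. -/
def MemDual (n : ℕ) (β : ℝ) (Ω : Set (Ed d)) (ρ : (Ed d → ℝ) → ℝ) : Prop :=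
  IsLinearMap ℝ ρ ∧ ∃ C, ∀ φ, ContDiff ℝ n φ → |ρ φ| ≤ C * hNorm n β Ω φ

/-- The dual norm `‖ρ‖_{-(n+β)}`. -/
def dualNorm (n : ℕ) (β : ℝ) (Ω : Set (Ed d)) (ρ : (Ed d → ℝ) → ℝ) : ℝ :=
  ⨆ φ : {φ : Ed d → ℝ // ContDiff ℝ n φ ∧ hNorm n β Ω φ ≤ 1}, ρ φ.1

/-- The dual norm `‖ρ‖_{-(n+β),N}` over test functions with `a Dφ·ν = 0` on `∂Ω`. -/
def dualNormN (n : ℕ) (β : ℝ) (Ω : Set (Ed d)) (ν : Ed d → Ed d)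
    (a : Ed d → Ed d →L[ℝ] Ed d) (ρ : (Ed d → ℝ) → ℝ) : ℝ :=
  ⨆ φ : {φ : Ed d → ℝ // ContDiff ℝ n φ ∧ hNorm n β Ω φ ≤ 1 ∧
      ∀ x ∈ frontier Ω, ⟪a x (gradient φ x), ν x⟫ = 0}, ρ φ.1

/-- The `W^{-1,∞}` dual norm. -/
def wm1Norm (Ω : Set (Ed d)) (ρ : (Ed d → ℝ) → ℝ) : ℝ :=
  ⨆ φ : {φ : Ed d → ℝ // ContDiff ℝ 1 φ ∧ w1inf Ω φ ≤ 1}, ρ φ.1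

/-- Pointwise statement that the parabolic norm `‖u‖_{(1+β)/2,1+β}` on `[t₀,T]×Ω`
is at most `C`. -/
def NormP1Le (β t0 T : ℝ) (Ω : Set (Ed d)) (u : ℝ → Ed d → ℝ) (C : ℝ) : Prop :=
  ∀ t ∈ Icc t0 T, ∀ s ∈ Icc t0 T, ∀ x ∈ Ω, ∀ y ∈ Ω,
    |u t x| ≤ C ∧ ‖gradient (u t) x‖ ≤ C ∧
    ‖gradient (u t) x - gradient (u t) y‖ ≤ C * dist x y ^ β ∧
    |u t x - u s x| ≤ C * |t - s| ^ ((1 + β) / 2) ∧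
    ‖gradient (u t) x - gradient (u s) x‖ ≤ C * |t - s| ^ (β / 2)

/-- Pointwise statement that the parabolic norm `‖u‖_{1+β/2,2+β}` on `[t₀,T]×Ω`
is at most `C`. -/
def NormP2Le (β t0 T : ℝ) (Ω : Set (Ed d)) (u : ℝ → Ed d → ℝ) (C : ℝ) : Prop :=
  ∀ t ∈ Icc t0 T, ∀ s ∈ Icc t0 T, ∀ x ∈ Ω, ∀ y ∈ Ω,
    |u t x| ≤ C ∧ ‖gradient (u t) x‖ ≤ C ∧ ‖fderiv ℝ (gradient (u t)) x‖ ≤ C ∧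
    |deriv (fun r => u r x) t| ≤ C ∧
    ‖fderiv ℝ (gradient (u t)) x - fderiv ℝ (gradient (u t)) y‖ ≤ C * dist x y ^ β ∧
    |deriv (fun r => u r x) t - deriv (fun r => u r y) t| ≤ C * dist x y ^ β ∧
    ‖gradient (u t) x - gradient (u s) x‖ ≤ C * |t - s| ^ ((1 + β) / 2) ∧
    ‖fderiv ℝ (gradient (u t)) x - fderiv ℝ (gradient (u s)) x‖ ≤ C * |t - s| ^ (β / 2) ∧
    |deriv (fun r => u r x) t - deriv (fun r => u r x) s| ≤ C * |t - s| ^ (β / 2)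

/-- Pointwise statement that the norm `‖u‖_{1,2+β}` on `[t₀,T]×Ω` is at most `C`. -/
def Norm12Le (β t0 T : ℝ) (Ω : Set (Ed d)) (u : ℝ → Ed d → ℝ) (C : ℝ) : Prop :=
  ∀ t ∈ Icc t0 T, ∀ x ∈ Ω, ∀ y ∈ Ω,
    |u t x| ≤ C ∧ |deriv (fun s => u s x) t| ≤ C ∧ ‖gradient (u t) x‖ ≤ C ∧
    ‖fderiv ℝ (gradient (u t)) x‖ ≤ C ∧
    |deriv (fun s => u s x) t - deriv (fun s => u s y) t| ≤ C * dist x y ^ β ∧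
    ‖fderiv ℝ (gradient (u t)) x - fderiv ℝ (gradient (u t)) y‖ ≤ C * dist x y ^ β

/-- `K` is the flat derivative of `V : P(Ω) → ℝ` with respect to the measure. -/
def IsFlatDeriv (Ω : Set (Ed d)) (V : Measure (Ed d) → ℝ)
    (K : Measure (Ed d) → Ed d → ℝ) : Prop :=
  (∀ m ∈ ProbOn Ω, Continuous (K m) ∧ (∫ y, K m y ∂m) = 0) ∧
  ∀ m₁ ∈ ProbOn Ω, ∀ m₂ ∈ ProbOn Ω,
    Tendsto (fun s : ℝ =>
        (V (ENNReal.ofReal (1 - s) • m₁ + ENNReal.ofReal s • m₂) - V m₁) / s)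
      (𝓝[>] 0) (𝓝 ((∫ y, K m₁ y ∂m₂) - ∫ y, K m₁ y ∂m₁))

/-- Hypotheses (A) of the paper. -/
structure HypA (β T : ℝ) (Ω : Set (Ed d)) (ν : Ed d → Ed d)
    (a : Ed d → Ed d →L[ℝ] Ed d) (H : Ed d → Ed d → ℝ)
    (F G : Ed d → Measure (Ed d) → ℝ)
    (DF DG : Ed d → Measure (Ed d) → Ed d → ℝ) : Prop where
  beta_mem : β ∈ Ioo (0 : ℝ) 1
  T_pos : 0 < T
  dom : C2Domain β Ω ν
  a_reg : C1Holder β a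
  a_ell : ∃ lam mu, IsElliptic lam mu Ω a
  H_smooth : ContDiff ℝ (⊤ : ℕ∞) (Function.uncurry H)
  H_lip : ∃ C : ℝ≥0, ∀ x, LipschitzWith C (H x)
  H_pp_pos : ∀ x p ξ, ξ ≠ 0 → 0 < ⟪fderiv ℝ (gradient (H x)) p ξ, ξ⟫
  H_pp_bdd : ∃ C, ∀ x p ξ, ⟪fderiv ℝ (gradient (H x)) p ξ, ξ⟫ ≤ C * ‖ξ‖ ^ 2
  F_mono : ∀ m ∈ ProbOn Ω, ∀ m' ∈ ProbOn Ω,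
    0 ≤ (∫ x, (F x m - F x m') ∂m) - ∫ x, (F x m - F x m') ∂m'
  G_mono : ∀ m ∈ ProbOn Ω, ∀ m' ∈ ProbOn Ω,
    0 ≤ (∫ x, (G x m - G x m') ∂m) - ∫ x, (G x m - G x m') ∂m'
  F_deriv : ∀ x, IsFlatDeriv Ω (F x) (DF x)
  G_deriv : ∀ x, IsFlatDeriv Ω (G x) (DG x)
  F_cont : ∀ m ∈ ProbOn Ω, Continuous fun x => F x m
  G_reg : ∀ m ∈ ProbOn Ω, ContDiff ℝ 2 fun x => G x m
  DF_reg : ∀ x, ∀ m ∈ ProbOn Ω, ContDiff ℝ 2 (DF x m)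
  DG_reg : ∀ x, ∀ m ∈ ProbOn Ω, ContDiff ℝ 2 (DG x m) ∧
    ∀ y, ContDiff ℝ 2 fun x' => DG x' m y
  F_bdd : ∃ C, ∀ m ∈ ProbOn Ω,
    hNorm 0 β Ω (fun x => F x m) ≤ C ∧ mixedNorm 0 2 β Ω (fun x y => DF x m y) ≤ C
  F_lip : ∃ C, ∀ m₁ ∈ ProbOn Ω, ∀ m₂ ∈ ProbOn Ω,
    mixedNorm 0 1 β Ω (fun x y => DF x m₁ y - DF x m₂ y) ≤ C * d1 m₁ m₂
  G_bdd : ∃ C, ∀ m ∈ ProbOn Ω,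
    hNorm 2 β Ω (fun x => G x m) ≤ C ∧ mixedNorm 2 2 β Ω (fun x y => DG x m y) ≤ C
  G_lip : ∃ C, ∀ m₁ ∈ ProbOn Ω, ∀ m₂ ∈ ProbOn Ω,
    mixedNorm 2 2 β Ω (fun x y => DG x m₁ y - DG x m₂ y) ≤ C * d1 m₁ m₂
  F_neumann : ∀ x, ∀ m ∈ ProbOn Ω, ∀ y ∈ frontier Ω,
    ⟪a y (gradient (fun y' => DF x m y') y), ν y⟫ = 0
  G_neumann : ∀ x, ∀ m ∈ ProbOn Ω, ∀ y ∈ frontier Ω,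
    ⟪a y (gradient (fun y' => DG x m y') y), ν y⟫ = 0
  G_neumann_x : ∀ m ∈ ProbOn Ω, ∀ x ∈ frontier Ω,
    ⟪a x (gradient (fun x' => G x' m) x), ν x⟫ = 0

/-- Admissible test functions for the weak (distributional) formulation of the
Fokker–Planck equation: space-time regular and satisfying the Neumann condition. -/
def TestFn (t0 T : ℝ) (Ω : Set (Ed d)) (ν : Ed d → Ed d)
    (a : Ed d → Ed d →L[ℝ] Ed d) (φ : ℝ → Ed d → ℝ) : Prop :=
  (∀ t ∈ Icc t0 T, ContDiff ℝ 2 (φ t)) ∧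
  (∀ x ∈ Ω, ∀ t ∈ Icc t0 T, DifferentiableAt ℝ (fun s => φ s x) t) ∧
  Continuous (fun p : ℝ × Ed d => φ p.1 p.2) ∧
  (∀ t ∈ Icc t0 T, ∀ x ∈ frontier Ω, ⟪a x (gradient (φ t) x), ν x⟫ = 0)

/-- Solution of the MFG system on `[t₀,T]×Ω` with Neumann boundary conditions:
`u` is a classical solution of the HJB equation and `m` a distributional solution
of the Fokker–Planck equation. -/
structure MFGSol (β t0 T : ℝ) (Ω : Set (Ed d)) (ν : Ed d → Ed d)
    (a : Ed d → Ed d →L[ℝ] Ed d) (H : Ed d → Ed d → ℝ)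
    (F G : Ed d → Measure (Ed d) → ℝ) (m0 : Measure (Ed d))
    (u : ℝ → Ed d → ℝ) (m : ℝ → Measure (Ed d)) : Prop where
  u_reg : ∀ t ∈ Icc t0 T, ContDiff ℝ 2 (u t)
  u_time : ∀ x ∈ Ω, ∀ t ∈ Ioo t0 T, DifferentiableAt ℝ (fun s => u s x) t
  u_cont : Continuous fun p : ℝ × Ed d => u p.1 p.2
  u_eq : ∀ t ∈ Ioo t0 T, ∀ x ∈ interior Ω,
    -(deriv (fun s => u s x) t) - traceA a (u t) x + H x (gradient (u t) x) = F x (m t)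
  u_final : ∀ x ∈ Ω, u T x = G x (m T)
  u_neumann : ∀ t ∈ Icc t0 T, ∀ x ∈ frontier Ω, ⟪a x (gradient (u t) x), ν x⟫ = 0
  m_prob : ∀ t ∈ Icc t0 T, m t ∈ ProbOn Ω
  m_init : m t0 = m0
  m_cont : ∀ t ∈ Icc t0 T, ∀ ε > 0, ∃ δ > 0, ∀ s ∈ Icc t0 T, |s - t| < δ →
    d1 (m s) (m t) < ε
  m_weak : ∀ φ, TestFn t0 T Ω ν a φ → ∀ s ∈ Icc t0 T, ∀ t ∈ Icc t0 T, s ≤ t →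
    ((∫ x, φ t x ∂(m t)) - ∫ x, φ s x ∂(m s)) +
      (∫ r in s..t, ∫ x, (-(deriv (fun τ => φ τ x) r) - traceA a (φ r) x +
        ⟪gradient (H x) (gradient (u r) x), gradient (φ r) x⟫) ∂(m r)) = 0

/-- `U` is the value function constructed from the MFG system:
`U(t₀,·,m₀) = u(t₀,·)` whenever `(u,m)` solves the MFG system starting from `(t₀,m₀)`. -/
def IsMFGValue (β T : ℝ) (Ω : Set (Ed d)) (ν : Ed d → Ed d)
    (a : Ed d → Ed d →L[ℝ] Ed d) (H : Ed d → Ed d → ℝ)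
    (F G : Ed d → Measure (Ed d) → ℝ)
    (U : ℝ → Ed d → Measure (Ed d) → ℝ) : Prop :=
  ∀ t0 ∈ Icc (0:ℝ) T, ∀ m0 ∈ ProbOn Ω, ∀ u m, MFGSol β t0 T Ω ν a H F G m0 u m →
    ∀ x ∈ Ω, U t0 x m0 = u t0 x

/-- `φ` solves the dual backward problem on `[t₀,t]×Ω` with data `(ψ,ξ)`:
`-φ_t - div(aDφ) + b·Dφ = ψ`, `φ(t) = ξ`, `aDφ·ν = 0` on `∂Ω`. -/
def DualTest (t0 t : ℝ) (Ω : Set (Ed d)) (ν : Ed d → Ed d)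
    (a : Ed d → Ed d →L[ℝ] Ed d) (b : ℝ → Ed d → Ed d)
    (ψ : ℝ → Ed d → ℝ) (ξ : Ed d → ℝ) (φ : ℝ → Ed d → ℝ) : Prop :=
  (∀ s ∈ Icc t0 t, ContDiff ℝ 2 (φ s)) ∧
  (∀ x ∈ Ω, ∀ s ∈ Ioo t0 t, DifferentiableAt ℝ (fun r => φ r x) s) ∧
  Continuous (fun p : ℝ × Ed d => φ p.1 p.2) ∧
  (∀ s ∈ Ioo t0 t, ∀ x ∈ interior Ω,
    -(deriv (fun r => φ r x) s) - divADiv a (φ s) x +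
      ⟪b s x, gradient (φ s) x⟫ = ψ s x) ∧
  (∀ x ∈ Ω, φ t x = ξ x) ∧
  (∀ s ∈ Icc t0 t, ∀ x ∈ frontier Ω, ⟪a x (gradient (φ s) x), ν x⟫ = 0)

/-- Weak solution, in the dual (test-function) sense, of the Fokker–Planck problem
`μ_t - div(aDμ) - div(μb) = f`, `μ(t₀) = μ₀`, `(aDμ + μb)·ν = 0` on `∂Ω`.
The solution is represented by a path of functionals `μf` together with an
integrable density `μd`. -/
structure FPWeak (β t0 T : ℝ) (Ω : Set (Ed d)) (ν : Ed d → Ed d)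
    (a : Ed d → Ed d →L[ℝ] Ed d) (b : ℝ → Ed d → Ed d)
    (f : ℝ → (Ed d → ℝ) → ℝ) (μ0 : (Ed d → ℝ) → ℝ)
    (μf : ℝ → (Ed d → ℝ) → ℝ) (μd : ℝ → Ed d → ℝ) : Prop where
  mem : ∀ t ∈ Icc t0 T, MemDual 1 β Ω (μf t)
  init : ∀ φ, ContDiff ℝ 1 φ → μf t0 φ = μ0 φ
  cont : ∀ t ∈ Icc t0 T, ∀ ε > 0, ∃ δ > 0, ∀ s ∈ Icc t0 T, |s - t| < δ →
    dualNormN 1 β Ω ν a (fun φ => μf s φ - μf t φ) < ε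
  integ : IntegrableOn (fun p : ℝ × Ed d => μd p.1 p.2) (Icc t0 T ×ˢ Ω)
  repr : ∀ᵐ t ∂(volume.restrict (Icc t0 T)), ∀ ξ : Ed d → ℝ, Continuous ξ →
    μf t ξ = ∫ x in Ω, μd t x * ξ x
  weak : ∀ t ∈ Icc t0 T, ∀ ψ : ℝ → Ed d → ℝ,
    (∃ Cψ, ∀ s x, |ψ s x| ≤ Cψ) → Continuous (fun p : ℝ × Ed d => ψ p.1 p.2) →
    ∀ ξ : Ed d → ℝ, ContDiff ℝ 1 ξ →
      (∀ x ∈ frontier Ω, ⟪a x (gradient ξ x), ν x⟫ = 0) →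
    ∀ φ : ℝ → Ed d → ℝ, DualTest t0 t Ω ν a b ψ ξ φ →
      μf t ξ + (∫ s in t0..t, ∫ x in Ω, μd s x * ψ s x) =
        μ0 (φ t0) + ∫ s in t0..t, f s (φ s)

/-- Solution of the (generalized) linearized MFG system around `(u,m)`, with data
`(h, c, z_T, ρ₀)`: `z` is a classical solution of the linear HJB equation and
`ρ` (given by `(ρf,ρd)`) a weak solution of the linear Fokker–Planck equation. -/
structure LinSol (β t0 T : ℝ) (Ω : Set (Ed d)) (ν : Ed d → Ed d)
    (a : Ed d → Ed d →L[ℝ] Ed d) (H : Ed d → Ed d → ℝ)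
    (DF DG : Ed d → Measure (Ed d) → Ed d → ℝ)
    (u : ℝ → Ed d → ℝ) (m : ℝ → Measure (Ed d))
    (h : ℝ → Ed d → ℝ) (c : ℝ → Ed d → Ed d) (zT : Ed d → ℝ)
    (ρ0 : (Ed d → ℝ) → ℝ)
    (z : ℝ → Ed d → ℝ) (ρf : ℝ → (Ed d → ℝ) → ℝ) (ρd : ℝ → Ed d → ℝ) : Prop where
  z_reg : ∀ t ∈ Icc t0 T, ContDiff ℝ 2 (z t)
  z_time : ∀ x ∈ Ω, ∀ t ∈ Ioo t0 T, DifferentiableAt ℝ (fun s => z s x) t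
  z_cont : Continuous fun p : ℝ × Ed d => z p.1 p.2
  z_eq : ∀ t ∈ Ioo t0 T, ∀ x ∈ interior Ω,
    -(deriv (fun s => z s x) t) - traceA a (z t) x +
      ⟪gradient (H x) (gradient (u t) x), gradient (z t) x⟫ =
      ρf t (fun y => DF x (m t) y) + h t x
  z_final : ∀ x ∈ Ω, z T x = ρf T (fun y => DG x (m T) y) + zT x
  z_neumann : ∀ t ∈ Icc t0 T, ∀ x ∈ frontier Ω, ⟪a x (gradient (z t) x), ν x⟫ = 0
  rho_fp : FPWeak β t0 T Ω ν a
    (fun s x => gradient (H x) (gradient (u s) x) + btilde a x)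
    (fun s φ => -(∫ y, ⟪fderiv ℝ (gradient (H y)) (gradient (u s) y) (gradient (z s) y),
        gradient φ y⟫ ∂(m s)) - ∫ y in Ω, ⟪c s y, gradient φ y⟫)
    ρ0 ρf ρd

/-- Classical solution of the backward Neumann problem
`-z_t - tr(a D²z) + b·Dz = f` on `(0,T)×Ω`, `z(T,·)=ψ`, `a Dz·ν = 0` on `∂Ω`. -/
structure BackwardSol (T : ℝ) (Ω : Set (Ed d)) (ν : Ed d → Ed d)
    (a : Ed d → Ed d →L[ℝ] Ed d) (b : ℝ → Ed d → Ed d) (f : ℝ → Ed d → ℝ)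
    (ψ : Ed d → ℝ) (z : ℝ → Ed d → ℝ) : Prop where
  reg : ∀ t ∈ Ioo (0:ℝ) T, ContDiff ℝ 2 (z t)
  tdiff : ∀ x ∈ Ω, ∀ t ∈ Ioo (0:ℝ) T, DifferentiableAt ℝ (fun s => z s x) t
  cont : ContinuousOn (fun p : ℝ × Ed d => z p.1 p.2) (Icc 0 T ×ˢ Ω)
  eq : ∀ t ∈ Ioo (0:ℝ) T, ∀ x ∈ interior Ω,
    -(deriv (fun s => z s x) t) - traceA a (z t) x + ⟪b t x, gradient (z t) x⟫ = f t x
  final : ∀ x ∈ Ω, z T x = ψ x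
  neumann : ∀ t ∈ Ioo (0:ℝ) T, ∀ x ∈ frontier Ω, ⟪a x (gradient (z t) x), ν x⟫ = 0

/-! ### Auxiliary lemmas for Statement 16 -/

open scoped Convolution Manifold

section Statement16Aux

variable {d : ℕ}

/-- Mollification of a bounded Lipschitz function on `Ed d`. -/
lemma mollify_exists (g : Ed d → ℝ) (K : ℝ≥0) (M : ℝ) (hg : LipschitzWith K g)
    (hb : ∀ x, |g x| ≤ M) {ε : ℝ} (hε : 0 < ε) :
    ∃ gs : Ed d → ℝ, ContDiff ℝ 1 gs ∧ (∀ x, |gs x - g x| ≤ K * ε) ∧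
      (∀ x, ‖fderiv ℝ gs x‖ ≤ K) ∧ (∀ x, |gs x| ≤ M + K * ε) ∧ LipschitzWith K gs := by
  set φ : ContDiffBump (0 : Ed d) := ⟨ε/2, ε, by positivity, by linarith⟩ with hφ
  set gs := φ.normed volume ⋆[ContinuousLinearMap.lsmul ℝ ℝ, volume] g with hgs
  have hsmooth : ContDiff ℝ 1 gs :=
    φ.hasCompactSupport_normed.contDiff_convolution_left _ φ.contDiff_normed
      (hg.continuous.locallyIntegrable)
  have hclose : ∀ x, |gs x - g x| ≤ K * ε := by
    intro x
    rw [← Real.dist_eq]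
    refine φ.dist_normed_convolution_le hg.continuous.aestronglyMeasurable ?_
    intro y hy
    calc dist (g y) (g x) ≤ K * dist y x := hg.dist_le_mul y x
    _ ≤ K * ε := by
        have : dist y x ≤ ε := le_of_lt (by simpa [Metric.mem_ball] using hy)
        exact mul_le_mul_of_nonneg_left this K.coe_nonneg
  have hlip : LipschitzWith K gs := by
    apply LipschitzWith.of_dist_le_mul
    intro x y
    have hint : ∀ z : Ed d, Integrable (fun t => φ.normed volume t * g (z - t)) volume := by
      intro z
      apply Continuous.integrable_of_hasCompactSupport
      · exact φ.continuous_normed.mul (hg.continuous.comp (continuous_const.sub continuous_id))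
      · exact φ.hasCompactSupport_normed.mul_right
    have hdef : ∀ z : Ed d, gs z = ∫ t, φ.normed volume t * g (z - t) := by
      intro z; rw [hgs, convolution_def]; simp [ContinuousLinearMap.lsmul_apply, smul_eq_mul]
    rw [Real.dist_eq, hdef x, hdef y, ← integral_sub (hint x) (hint y)]
    have hbd : ∀ t, ‖φ.normed volume t * g (x - t) - φ.normed volume t * g (y - t)‖ ≤
        φ.normed volume t * (K * dist x y) := by
      intro t
      rw [← mul_sub, norm_mul, Real.norm_eq_abs, Real.norm_eq_abs,
        abs_of_nonneg (φ.nonneg_normed t)]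
      apply mul_le_mul_of_nonneg_left _ (φ.nonneg_normed t)
      calc |g (x - t) - g (y - t)| = dist (g (x-t)) (g (y-t)) := (Real.dist_eq _ _).symm
      _ ≤ K * dist (x - t) (y - t) := hg.dist_le_mul _ _
      _ = K * dist x y := by rw [dist_sub_right]
    calc ‖∫ t, (φ.normed volume t * g (x - t) - φ.normed volume t * g (y - t))‖
        ≤ ∫ t, φ.normed volume t * (K * dist x y) :=
          norm_integral_le_of_norm_le (φ.integrable_normed.mul_const _)
            (Eventually.of_forall hbd)
    _ = K * dist x y := by rw [integral_mul_const, φ.integral_normed, one_mul]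
  refine ⟨gs, hsmooth, hclose, fun x => norm_fderiv_le_of_lipschitz ℝ hlip, fun x => ?_, hlip⟩
  calc |gs x| ≤ |gs x - g x| + |g x| := by
        have := abs_add_le (gs x - g x) (g x); simpa using this
  _ ≤ M + K * ε := by have := hclose x; have := hb x; linarith

/-- A smooth cutoff equal to `1` on a compact set, supported inside an open set. -/
lemma exists_cutoff {K U : Set (Ed d)} (hK : IsCompact K) (hU : IsOpen U) (hKU : K ⊆ U) :
    ∃ ζ : Ed d → ℝ, ContDiff ℝ 1 ζ ∧ HasCompactSupport ζ ∧ tsupport ζ ⊆ U ∧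
      EqOn ζ 1 K ∧ ∀ x, ζ x ∈ Icc (0:ℝ) 1 := by
  obtain ⟨L, hLc, hKL, hLU⟩ := exists_compact_between hK hU hKU
  have hd : Disjoint ((interior L)ᶜ) K :=
    disjoint_compl_left_iff_subset.mpr hKL
  obtain ⟨f, hf0, hf1, hf01⟩ := exists_contMDiffMap_zero_one_of_isClosed (𝓘(ℝ, Ed d)) (n := (⊤ : ℕ∞))
    isOpen_interior.isClosed_compl hK.isClosed hd
  have hcd : ContDiff ℝ 1 f := by
    have := f.contMDiff
    rw [contMDiff_iff_contDiff] at this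
    exact this.of_le (by exact_mod_cast le_top)
  have hsupp : tsupport f ⊆ L := by
    have h1 : Function.support f ⊆ interior L := by
      intro x hx
      by_contra hxL
      exact hx (hf0 (by simpa using hxL))
    calc tsupport f ⊆ closure (interior L) := closure_mono h1
    _ ⊆ L := closure_minimal interior_subset hLc.isClosed
  exact ⟨f, hcd, hLc.of_isClosed_subset isClosed_closure hsupp, hsupp.trans hLU, hf1, hf01⟩

/-- The adjoint, as a continuous linear map on operators over `ℝ`. -/
def adjCLM (d : ℕ) : ((Ed d) →L[ℝ] (Ed d)) →L[ℝ] ((Ed d) →L[ℝ] (Ed d)) :=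
  LinearMap.mkContinuous
    { toFun := ContinuousLinearMap.adjoint
      map_add' := fun A B => map_add _ A B
      map_smul' := fun r A => by
        have := LinearIsometryEquiv.map_smulₛₗ
          (ContinuousLinearMap.adjoint (E := Ed d) (F := Ed d) (𝕜 := ℝ)) r A
        simpa [starRingEnd_apply] using this }
    1 (fun A => by
      simp only [LinearMap.coe_mk, AddHom.coe_mk, one_mul]
      exact le_of_eq (LinearIsometryEquiv.norm_map _ A))

@[simp] lemma adjCLM_apply (A : (Ed d) →L[ℝ] (Ed d)) :
    adjCLM d A = ContinuousLinearMap.adjoint A := rfl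

/-- `(toDual ℝ E).symm`, as a continuous linear map over `ℝ`. -/
def dualIso (d : ℕ) : (StrongDual ℝ (Ed d)) →L[ℝ] Ed d :=
  LinearMap.mkContinuous
    { toFun := (InnerProductSpace.toDual ℝ (Ed d)).symm
      map_add' := fun A B => map_add _ A B
      map_smul' := fun r A => by
        have := LinearIsometryEquiv.map_smulₛₗ
          (InnerProductSpace.toDual ℝ (Ed d)).symm r A
        simpa [starRingEnd_apply] using this }
    1 (fun A => by
      simp only [LinearMap.coe_mk, AddHom.coe_mk, one_mul]
      exact le_of_eq (LinearIsometryEquiv.norm_map _ A))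

@[simp] lemma dualIso_apply (A : StrongDual ℝ (Ed d)) :
    dualIso d A = (InnerProductSpace.toDual ℝ (Ed d)).symm A := rfl

lemma norm_gradient_eq (f : Ed d → ℝ) (x : Ed d) :
    ‖gradient f x‖ = ‖fderiv ℝ f x‖ := LinearIsometryEquiv.norm_map _ _

lemma inner_gradient (f : Ed d → ℝ) (x v : Ed d) :
    ⟪gradient f x, v⟫ = fderiv ℝ f x v := InnerProductSpace.toDual_symm_apply

lemma contDiff_gradient {f : Ed d → ℝ} (hf : ContDiff ℝ 2 f) :
    ContDiff ℝ 1 (gradient f) := by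
  have h1 : ContDiff ℝ 1 (fderiv ℝ f) := hf.fderiv_right (by norm_num)
  exact (dualIso d).contDiff.comp h1

set_option maxHeartbeats 1000000 in
/-- Main geometric lemma: a family of `C¹` maps flattening the `a`-oblique direction
at the boundary. -/
lemma exists_flattening {β lam mu : ℝ} {Ω : Set (Ed d)} {ν : Ed d → Ed d}
    {a : Ed d → Ed d →L[ℝ] Ed d}
    (hdom : C2Domain β Ω ν) (ha : C1Holder β a) (hell : IsElliptic lam mu Ω a) :
    ∃ CF KF : ℝ, 0 ≤ CF ∧ 1 ≤ KF ∧ ∃ Φ : ℝ → Ed d → Ed d,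
      ∀ δ : ℝ, 0 < δ → δ ≤ 1 →
        ContDiff ℝ 1 (Φ δ) ∧
        (∀ x, ‖Φ δ x - x‖ ≤ CF * δ) ∧
        (∀ x, ‖fderiv ℝ (Φ δ) x‖ ≤ KF) ∧
        (∀ g : Ed d → ℝ, ContDiff ℝ 1 g → ∀ x ∈ frontier Ω,
          ⟪a x (gradient (fun y => g (Φ δ y)) x), ν x⟫ = 0) := by
  classical
  obtain ⟨ρ, hρ2, -, hint, hfr, hbd⟩ := hdom.defining
  have hΩclosed : IsClosed Ω := hdom.compact.isClosed
  have hfsub : frontier Ω ⊆ Ω := hΩclosed.frontier_subset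
  set G : Ed d → Ed d := gradient ρ with hG
  have hGc : ContDiff ℝ 1 G := contDiff_gradient hρ2
  set W : Ed d → Ed d := fun x => adjCLM d (a x) (G x) with hW
  have hWc : ContDiff ℝ 1 W :=
    ContDiff.clm_apply ((adjCLM d).contDiff.comp ha.1) hGc
  set mm : Ed d → ℝ := fun x => ⟪G x, W x⟫ with hmm
  have hmmc : ContDiff ℝ 1 mm := ContDiff.inner (𝕜 := ℝ) hGc hWc
  set U₀ : Set (Ed d) := {x | 0 < mm x} with hU₀
  have hU₀open : IsOpen U₀ := isOpen_lt continuous_const hmmc.continuous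
  have hfrU : frontier Ω ⊆ U₀ := by
    intro x hx
    have hGx : G x ≠ 0 := (hbd x hx).1
    have hmx : mm x = ⟪a x (G x), G x⟫ := by
      rw [hmm]; simp only [hW, adjCLM_apply]
      rw [ContinuousLinearMap.adjoint_inner_right]
    have h1 := (hell.2.2 x (hfsub hx) (G x)).1
    have h2 : (0:ℝ) < lam * ‖G x‖ ^ 2 := by
      have h3 : (0:ℝ) < ‖G x‖ := norm_pos_iff.mpr hGx
      have h4 := hell.1
      positivity
    show 0 < mm x
    rw [hmx]; exact lt_of_lt_of_le h2 h1
  have hfrK : IsCompact (frontier Ω) :=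
    hdom.compact.of_isClosed_subset isClosed_frontier hfsub
  obtain ⟨ζ, hζc, hζcs, hζsupp, hζ1, hζ01⟩ := exists_cutoff hfrK hU₀open hfrU
  set F : Ed d → Ed d := fun x => ζ x • ((mm x)⁻¹ • W x) with hF
  have hFc : ContDiff ℝ 1 F := by
    rw [contDiff_iff_contDiffAt]
    intro x
    by_cases hx : 0 < mm x
    · exact hζc.contDiffAt.smul
        (((hmmc.contDiffAt).inv (ne_of_gt hx)).smul hWc.contDiffAt)
    · have hxn : x ∉ tsupport ζ := fun hmem => hx (hζsupp hmem)
      have hev : F =ᶠ[𝓝 x] (fun _ => (0 : Ed d)) := by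
        filter_upwards [(isClosed_tsupport ζ).isOpen_compl.mem_nhds hxn] with y hy
        have : ζ y = 0 := image_eq_zero_of_notMem_tsupport hy
        simp [hF, this]
      exact (contDiffAt_const (c := (0:Ed d))).congr_of_eventuallyEq hev
  have hFcs : HasCompactSupport F := by
    apply hζcs.mono
    intro x hx
    simp only [hF, Function.mem_support] at hx ⊢
    intro h0; exact hx (by simp [h0])
  obtain ⟨CF₀, hCF₀⟩ := hFcs.exists_bound_of_continuous hFc.continuous
  have hFd : HasCompactSupport (fderiv ℝ F) := hFcs.fderiv ℝ
  obtain ⟨CF₁, hCF₁⟩ := hFd.exists_bound_of_continuous (hFc.continuous_fderiv one_ne_zero)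
  set q : Ed d → ℝ := fun x => ‖fderiv ℝ ρ x‖ * ‖F x‖ with hq
  have hqc : Continuous q :=
    ((hρ2.continuous_fderiv (by norm_num)).norm).mul hFc.continuous.norm
  have hqcs : HasCompactSupport q := by
    apply hFcs.norm.mono
    intro x hx
    simp only [hq, Function.mem_support] at hx ⊢
    intro h0; exact hx (by simp [h0])
  obtain ⟨CF₂, hCF₂⟩ := hqcs.exists_bound_of_continuous hqc
  have hCF₂' : ∀ x, ‖fderiv ℝ ρ x‖ * ‖F x‖ ≤ CF₂ := by
    intro x
    have := hCF₂ x
    calc ‖fderiv ℝ ρ x‖ * ‖F x‖ ≤ |q x| := le_abs_self _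
    _ = ‖q x‖ := rfl
    _ ≤ CF₂ := this
  refine ⟨max CF₀ 0, 1 + max CF₁ 0 + max CF₂ 0, le_max_right _ _, by
    have := le_max_right CF₁ (0:ℝ); have := le_max_right CF₂ (0:ℝ); linarith, ?_⟩
  set Φ : ℝ → Ed d → Ed d := fun δ x => x - (δ * Real.sin (δ⁻¹ * ρ x)) • F x with hΦ
  refine ⟨Φ, ?_⟩
  intro δ hδ0 hδ1
  have hδne : δ ≠ 0 := ne_of_gt hδ0
  have hρ1 : ContDiff ℝ 1 ρ := hρ2.of_le (by norm_num)
  -- the scalar factor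
  have hcc : ContDiff ℝ 1 (fun x => δ * Real.sin (δ⁻¹ * ρ x)) := by
    apply contDiff_const.mul
    exact (Real.contDiff_sin.of_le le_top).comp (contDiff_const.mul hρ1)
  have hΦc : ContDiff ℝ 1 (Φ δ) := contDiff_id.sub (hcc.smul hFc)
  -- derivative of the scalar factor
  have hsc : ∀ x : Ed d, HasFDerivAt (fun x => δ * Real.sin (δ⁻¹ * ρ x))
      (Real.cos (δ⁻¹ * ρ x) • fderiv ℝ ρ x) x := by
    intro x
    have hρd : HasFDerivAt ρ (fderiv ℝ ρ x) x :=
      (hρ1.differentiable one_ne_zero x).hasFDerivAt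
    have h1 : HasFDerivAt (fun x => δ⁻¹ * ρ x) (δ⁻¹ • fderiv ℝ ρ x) x :=
      hρd.const_mul δ⁻¹
    have h2 : HasDerivAt Real.sin (Real.cos (δ⁻¹ * ρ x)) (δ⁻¹ * ρ x) :=
      Real.hasDerivAt_sin _
    have h3 := (h2.comp_hasFDerivAt x h1).const_mul δ
    have heq : δ • Real.cos (δ⁻¹ * ρ x) • δ⁻¹ • fderiv ℝ ρ x
        = Real.cos (δ⁻¹ * ρ x) • fderiv ℝ ρ x := by
      rw [smul_smul, smul_smul]
      congr 1
      field_simp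
    rw [heq] at h3
    exact h3
  have hFd' : ∀ x : Ed d, HasFDerivAt F (fderiv ℝ F x) x :=
    fun x => (hFc.differentiable one_ne_zero x).hasFDerivAt
  have hΦd : ∀ x : Ed d, HasFDerivAt (Φ δ)
      (ContinuousLinearMap.id ℝ (Ed d) -
        ((δ * Real.sin (δ⁻¹ * ρ x)) • fderiv ℝ F x +
          (Real.cos (δ⁻¹ * ρ x) • fderiv ℝ ρ x).smulRight (F x))) x := by
    intro x
    exact (hasFDerivAt_id x).sub ((hsc x).smul (hFd' x))
  refine ⟨hΦc, ?_, ?_, ?_⟩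
  · -- displacement bound
    intro x
    have : Φ δ x - x = -((δ * Real.sin (δ⁻¹ * ρ x)) • F x) := by
      simp only [hΦ, sub_sub_cancel_left]
    rw [this, norm_neg, norm_smul]
    calc ‖δ * Real.sin (δ⁻¹ * ρ x)‖ * ‖F x‖ ≤ (δ * 1) * max CF₀ 0 := by
          apply mul_le_mul
          · rw [Real.norm_eq_abs, abs_mul, abs_of_pos hδ0]
            exact mul_le_mul_of_nonneg_left (abs_le_one_iff_mul_self_le_one.mpr
              (by nlinarith [Real.neg_one_le_sin (δ⁻¹ * ρ x), Real.sin_le_one (δ⁻¹ * ρ x)])) hδ0.le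
          · exact le_max_of_le_left (hCF₀ x)
          · exact norm_nonneg _
          · positivity
    _ = max CF₀ 0 * δ := by ring
  · -- derivative bound
    intro x
    rw [(hΦd x).fderiv]
    calc ‖ContinuousLinearMap.id ℝ (Ed d) -
          ((δ * Real.sin (δ⁻¹ * ρ x)) • fderiv ℝ F x +
            (Real.cos (δ⁻¹ * ρ x) • fderiv ℝ ρ x).smulRight (F x))‖
        ≤ ‖ContinuousLinearMap.id ℝ (Ed d)‖ +
          (‖(δ * Real.sin (δ⁻¹ * ρ x)) • fderiv ℝ F x‖ +
           ‖(Real.cos (δ⁻¹ * ρ x) • fderiv ℝ ρ x).smulRight (F x)‖) :=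
          (norm_sub_le _ _).trans (by gcongr; exact norm_add_le _ _)
    _ ≤ 1 + (max CF₁ 0 + max CF₂ 0) := by
        gcongr
        · exact ContinuousLinearMap.norm_id_le
        · rw [norm_smul]
          apply le_max_of_le_left
          calc ‖δ * Real.sin (δ⁻¹ * ρ x)‖ * ‖fderiv ℝ F x‖ ≤ 1 * CF₁ := by
                apply mul_le_mul _ (hCF₁ x) (norm_nonneg _) zero_le_one
                rw [Real.norm_eq_abs, abs_mul, abs_of_pos hδ0]
                calc δ * |Real.sin (δ⁻¹ * ρ x)| ≤ δ * 1 := by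
                      exact mul_le_mul_of_nonneg_left (abs_le_one_iff_mul_self_le_one.mpr
                        (by nlinarith [Real.neg_one_le_sin (δ⁻¹ * ρ x),
                          Real.sin_le_one (δ⁻¹ * ρ x)])) hδ0.le
                _ ≤ 1 := by linarith
          _ = CF₁ := one_mul _
        · rw [ContinuousLinearMap.norm_smulRight_apply, norm_smul]
          apply le_max_of_le_left
          calc ‖Real.cos (δ⁻¹ * ρ x)‖ * ‖fderiv ℝ ρ x‖ * ‖F x‖
              ≤ 1 * ‖fderiv ℝ ρ x‖ * ‖F x‖ := by
                gcongr
                rw [Real.norm_eq_abs]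
                exact Real.abs_cos_le_one _
          _ = ‖fderiv ℝ ρ x‖ * ‖F x‖ := by ring
          _ ≤ CF₂ := hCF₂' x
    _ = 1 + max CF₁ 0 + max CF₂ 0 := by ring
  · -- Neumann condition
    intro g hg x hx
    have hρx : ρ x = 0 := by
      have h := hx; rw [hfr] at h; exact h
    have hGx : G x ≠ 0 := (hbd x hx).1
    have hν : ν x = ‖G x‖⁻¹ • G x := (hbd x hx).2
    have hmx : mm x ≠ 0 := ne_of_gt (hfrU hx)
    -- derivative of Φ δ at x applied to the oblique direction is zero
    set v₀ : Ed d := ContinuousLinearMap.adjoint (a x) (ν x) with hv₀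
    have hFx : F x = (mm x)⁻¹ • W x := by
      rw [hF]; simp [hζ1 hx]
    have hfer : fderiv ℝ (Φ δ) x v₀ = 0 := by
      rw [(hΦd x).fderiv]
      have h1 : δ * Real.sin (δ⁻¹ * ρ x) = 0 := by rw [hρx]; simp
      have h2 : Real.cos (δ⁻¹ * ρ x) = 1 := by rw [hρx]; simp
      simp only [ContinuousLinearMap.sub_apply, ContinuousLinearMap.add_apply,
        ContinuousLinearMap.id_apply, h1, h2, zero_smul, one_smul,
        ContinuousLinearMap.zero_apply, zero_add, ContinuousLinearMap.smulRight_apply,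
        ContinuousLinearMap.smul_apply]
      have hval : fderiv ℝ ρ x v₀ = ‖G x‖⁻¹ * mm x := by
        rw [← inner_gradient ρ x v₀]
        rw [hv₀, hν]
        rw [ContinuousLinearMap.map_smul]
        rw [real_inner_smul_right]
        congr 1
      have hv₀' : v₀ = ‖G x‖⁻¹ • W x := by
        rw [hv₀, hν, ContinuousLinearMap.map_smul, hW]; simp
      rw [hval, hFx, hv₀', smul_smul]
      rw [mul_assoc, mul_inv_cancel₀ hmx, mul_one, sub_self]
    -- now the inner product computation
    have hdiffg : DifferentiableAt ℝ g (Φ δ x) := hg.differentiable one_ne_zero _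
    have hdiffΦ : DifferentiableAt ℝ (Φ δ) x := hΦc.differentiable one_ne_zero x
    have hcomp : fderiv ℝ (fun y => g (Φ δ y)) x =
        (fderiv ℝ g (Φ δ x)).comp (fderiv ℝ (Φ δ) x) := fderiv_comp x hdiffg hdiffΦ
    have key : ⟪a x (gradient (fun y => g (Φ δ y)) x), ν x⟫
        = fderiv ℝ (fun y => g (Φ δ y)) x v₀ := by
      rw [real_inner_comm]
      rw [hv₀, ← ContinuousLinearMap.adjoint_inner_left]
      rw [real_inner_comm]
      exact inner_gradient _ x v₀
    rw [key, hcomp]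
    simp [hfer]

end Statement16Aux

/-- approximation of `W^{1,∞}(Ω)` functions by `C¹` functions satisfying
the Neumann compatibility condition `a Dψ̃ⁿ·ν = 0` on `∂Ω`, with uniform `C¹` bounds. -/
theorem statement_16
    (d : ℕ) (β lam mu : ℝ) (hβ : β ∈ Ioo (0:ℝ) 1)
    (Ω : Set (Ed d)) (ν : Ed d → Ed d) (a : Ed d → Ed d →L[ℝ] Ed d)
    (hdom : C2Domain β Ω ν) (ha : C1Holder β a) (hell : IsElliptic lam mu Ω a) :
    ∃ C : ℝ, 0 < C ∧ ∀ ψ : Ed d → ℝ, ∀ L : ℝ≥0, LipschitzOnWith L ψ Ω →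
      ∃ ψn : ℕ → Ed d → ℝ,
        (∀ n, ContDiff ℝ 1 (ψn n)) ∧
        (∀ n, ∀ x ∈ frontier Ω, ⟪a x (gradient (ψn n) x), ν x⟫ = 0) ∧
        (∀ n, ∀ x ∈ Ω, |ψn n x| + ‖gradient (ψn n) x‖ ≤ C * w1inf Ω ψ) ∧
        TendstoUniformlyOn (fun n x => ψn n x) ψ atTop Ω := by
  classical
  obtain ⟨CF, KF, hCF0, hKF1, Φ, hΦ⟩ := exists_flattening hdom ha hell
  refine ⟨1 + KF, by linarith, ?_⟩
  intro ψ L hL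
  obtain ⟨x₀, hx₀⟩ : Ω.Nonempty := hdom.nonempty.mono interior_subset
  set M := supOn Ω (fun x => |ψ x|) with hMdef
  set L' := hSemi 1 Ω ψ with hLdef
  obtain ⟨B, hB⟩ := hdom.compact.exists_bound_of_continuousOn hL.continuousOn
  have hbddM : BddAbove (range fun x : Ω => |ψ (x:Ed d)|) := by
    refine ⟨B, ?_⟩
    rintro y ⟨x, rfl⟩
    exact hB x x.2
  have hM : ∀ x ∈ Ω, |ψ x| ≤ M := fun x hx => le_ciSup hbddM ⟨x, hx⟩
  have hM0 : 0 ≤ M := le_trans (abs_nonneg _) (hM x₀ hx₀)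
  have hbddL : BddAbove (range fun p : Ω × Ω =>
      ‖ψ (p.1:Ed d) - ψ (p.2:Ed d)‖ / dist (p.1:Ed d) (p.2:Ed d) ^ (1:ℝ)) := by
    refine ⟨L, ?_⟩
    rintro y ⟨p, rfl⟩
    show ‖ψ (p.1:Ed d) - ψ (p.2:Ed d)‖ / dist (p.1:Ed d) (p.2:Ed d) ^ (1:ℝ) ≤ (L:ℝ)
    rcases eq_or_ne (p.1 : Ed d) (p.2 : Ed d) with h | h
    · simp [h]
    · have hd : 0 < dist (p.1:Ed d) (p.2:Ed d) := dist_pos.mpr h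
      rw [Real.rpow_one, div_le_iff₀ hd]
      have := lipschitzOnWith_iff_dist_le_mul.mp hL _ p.1.2 _ p.2.2
      simpa [Real.dist_eq] using this
  have hL'0 : 0 ≤ L' := by
    have h : ‖ψ x₀ - ψ x₀‖ / dist x₀ x₀ ^ (1:ℝ) ≤ L' :=
      le_ciSup hbddL ⟨⟨x₀, hx₀⟩, ⟨x₀, hx₀⟩⟩
    have h2 : ‖ψ x₀ - ψ x₀‖ / dist x₀ x₀ ^ (1:ℝ) = 0 := by simp
    linarith
  have hL'le : ∀ x ∈ Ω, ∀ y ∈ Ω, |ψ x - ψ y| ≤ L' * dist x y := by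
    intro x hx y hy
    rcases eq_or_ne x y with rfl | h
    · simp
    · have hd : 0 < dist x y := dist_pos.mpr h
      have hle : ‖ψ x - ψ y‖ / dist x y ^ (1:ℝ) ≤ L' :=
        le_ciSup hbddL ⟨⟨x, hx⟩, ⟨y, hy⟩⟩
      rw [Real.rpow_one, div_le_iff₀ hd] at hle
      exact hle
  have hLOW : LipschitzOnWith L'.toNNReal ψ Ω := by
    apply lipschitzOnWith_iff_dist_le_mul.mpr
    intro x hx y hy
    rw [Real.dist_eq, Real.coe_toNNReal _ hL'0]
    exact hL'le x hx y hy
  obtain ⟨g, hglip, hgeq⟩ := hLOW.extend_real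
  set g₀ : Ed d → ℝ := fun x => max (-M) (min (g x) M) with hg₀def
  have hg₀lip : LipschitzWith L'.toNNReal g₀ := by
    apply LipschitzWith.of_dist_le_mul
    intro x y
    rw [Real.dist_eq]
    have h1 : |g₀ x - g₀ y| ≤ |g x - g y| := by
      calc |g₀ x - g₀ y| ≤ max |(-M) - (-M)| |min (g x) M - min (g y) M| :=
            abs_max_sub_max_le_max _ _ _ _
      _ ≤ |g x - g y| := by
          apply max_le
          · simp [abs_nonneg]
          · calc |min (g x) M - min (g y) M| ≤ max |g x - g y| |M - M| :=
                abs_min_sub_min_le_max _ _ _ _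
            _ ≤ |g x - g y| := by apply max_le le_rfl; simp [abs_nonneg]
    calc |g₀ x - g₀ y| ≤ |g x - g y| := h1
    _ = dist (g x) (g y) := (Real.dist_eq _ _).symm
    _ ≤ L'.toNNReal * dist x y := hglip.dist_le_mul x y
  have hg₀eq : EqOn ψ g₀ Ω := by
    intro x hx
    have h1 := abs_le.mp (hM x hx)
    have h2 : g x = ψ x := (hgeq hx).symm
    rw [hg₀def]
    simp only [h2]
    rw [min_eq_left h1.2, max_eq_right h1.1]
  have hg₀b : ∀ x, |g₀ x| ≤ M := by
    intro x
    rw [abs_le]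
    constructor
    · calc -M ≤ max (-M) (min (g x) M) := le_max_left _ _
      _ = g₀ x := rfl
    · apply max_le (by linarith) (min_le_right _ _)
  set δ : ℕ → ℝ := fun n => 1 / ((n:ℝ) + 1) with hδdef
  have hδ0 : ∀ n, 0 < δ n := fun n => by positivity
  have hδ1 : ∀ n, δ n ≤ 1 := by
    intro n
    rw [hδdef]
    rw [div_le_one (by positivity)]
    simp
  choose gs hgs1 hgs2 hgs3 hgs4 hgs5 using
    fun n : ℕ => mollify_exists g₀ L'.toNNReal M hg₀lip hg₀b (hδ0 n)
  have hKco : (L'.toNNReal : ℝ) = L' := Real.coe_toNNReal _ hL'0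
  refine ⟨fun n x => gs n (Φ (δ n) x), ?_, ?_, ?_, ?_⟩
  · intro n
    exact (hgs1 n).comp (hΦ (δ n) (hδ0 n) (hδ1 n)).1
  · intro n x hx
    exact (hΦ (δ n) (hδ0 n) (hδ1 n)).2.2.2 (gs n) (hgs1 n) x hx
  · intro n x hx
    have hflat := hΦ (δ n) (hδ0 n) (hδ1 n)
    have hgrad : ‖gradient (fun y => gs n (Φ (δ n) y)) x‖ ≤ L' * KF := by
      rw [norm_gradient_eq]
      have hcomp : fderiv ℝ (fun y => gs n (Φ (δ n) y)) x =
          (fderiv ℝ (gs n) (Φ (δ n) x)).comp (fderiv ℝ (Φ (δ n)) x) :=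
        fderiv_comp x ((hgs1 n).differentiable one_ne_zero _)
          (hflat.1.differentiable one_ne_zero x)
      rw [hcomp]
      calc ‖(fderiv ℝ (gs n) (Φ (δ n) x)).comp (fderiv ℝ (Φ (δ n)) x)‖
          ≤ ‖fderiv ℝ (gs n) (Φ (δ n) x)‖ * ‖fderiv ℝ (Φ (δ n)) x‖ :=
            ContinuousLinearMap.opNorm_comp_le _ _
      _ ≤ L' * KF := by
          apply mul_le_mul _ (hflat.2.2.1 x) (norm_nonneg _) hL'0
          rw [← hKco]
          exact hgs3 n _
    have habs : |gs n (Φ (δ n) x)| ≤ M + L' := by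
      calc |gs n (Φ (δ n) x)| ≤ M + L'.toNNReal * δ n := hgs4 n _
      _ ≤ M + L' := by
          rw [hKco]
          have := mul_le_mul_of_nonneg_left (hδ1 n) hL'0
          linarith
    have hw : w1inf Ω ψ = M + L' := rfl
    rw [hw]
    calc |gs n (Φ (δ n) x)| + ‖gradient (fun y => gs n (Φ (δ n) y)) x‖
        ≤ (M + L') + L' * KF := add_le_add habs hgrad
    _ ≤ (1 + KF) * (M + L') := by nlinarith
  · rw [Metric.tendstoUniformlyOn_iff]
    intro ε hε
    have htend : Tendsto (fun n : ℕ => (L' * (1 + CF)) * (1 / ((n:ℝ) + 1)))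
        atTop (𝓝 0) := by
      have := tendsto_one_div_add_atTop_nhds_zero_nat.const_mul (L' * (1 + CF))
      simpa using this
    filter_upwards [htend.eventually (gt_mem_nhds hε)] with n hn
    intro x hx
    have hflat := hΦ (δ n) (hδ0 n) (hδ1 n)
    rw [Real.dist_eq]
    have h1 : |ψ x - gs n x| ≤ L' * δ n := by
      rw [hg₀eq hx, abs_sub_comm]
      have := hgs2 n x
      rwa [hKco] at this
    have h2 : |gs n x - gs n (Φ (δ n) x)| ≤ L' * (CF * δ n) := by
      have hd := (hgs5 n).dist_le_mul x (Φ (δ n) x)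
      rw [Real.dist_eq, hKco] at hd
      calc |gs n x - gs n (Φ (δ n) x)| ≤ L' * dist x (Φ (δ n) x) := hd
      _ ≤ L' * (CF * δ n) := by
          apply mul_le_mul_of_nonneg_left _ hL'0
          rw [dist_eq_norm, norm_sub_rev]
          exact hflat.2.1 x
    calc |ψ x - gs n (Φ (δ n) x)|
        ≤ |ψ x - gs n x| + |gs n x - gs n (Φ (δ n) x)| := abs_sub_le _ _ _
    _ ≤ L' * δ n + L' * (CF * δ n) := add_le_add h1 h2
    _ = (L' * (1 + CF)) * (1 / ((n:ℝ) + 1)) := by rw [hδdef]; ring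
    _ < ε := hn


end MasterNeumann
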